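/- In S_fde semantics, for every valuation v and all formulas A, B: v(A∨B) is designated (i.e., in {T,B}) if and only if one of the following holds: (v(A) designated and v(¬B) designated), or (v(¬A) designated and v(B) designated), or (v(A) designated and v(B) designated). This establishes soundness of the disjunction introduction rules (↔∨I′₁), (↔∨I′₂), (↔∨I′₃) and the elimination rule (↔∨E′) of the natural deduction system ND′_{S_fde}. -/
import Mathlib


inductive V4 : Type
  | T | B | N | F
deriving DecidableEq, Repr

def negS : V4 → V4
  | .T => .F
  | .B => .B
  | .N => .N
  | .F => .T

def andS : V4 → V4 → V4
  | .N, _ => .N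
  | _, .N => .N
  | .T, y => y
  | .B, .T => .B
  | .B, .B => .B
  | .B, .F => .F
  | .F, _ => .F

def orS : V4 → V4 → V4
  | .N, _ => .N
  | _, .N => .N
  | .T, _ => .T
  | _, .T => .T
  | .B, _ => .B
  | .F, .B => .B
  | .F, .F => .F

inductive Fm : Type
  | var : Nat → Fm
  | neg : Fm → Fm
  | conj : Fm → Fm → Fm
  | disj : Fm → Fm → Fm

def eval (v : Nat → V4) : Fm → V4
  | .var p => v p
  | .neg A => negS (eval v A)
  | .conj A B => andS (eval v A) (eval v B)
  | .disj A B => orS (eval v A) (eval v B)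

def des (x : V4) : Prop := x = V4.T ∨ x = V4.B

theorem sfde_disj_sound (v : Nat → V4) (A B : Fm) :
    des (eval v (Fm.disj A B)) ↔
      (des (eval v A) ∧ des (eval v (Fm.neg B))) ∨
      (des (eval v (Fm.neg A)) ∧ des (eval v B)) ∨
      (des (eval v A) ∧ des (eval v B)) := by
  simp only [eval, des]
  rcases eval v A <;> rcases eval v B <;> simp [orS, negS]
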